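/- arXiv:1811.01057 — 4 statements merged into one kernel-verified Lean document; each statement's English description precedes it below -/
import Mathlib

section
/- Let W ∈ ℝ^{m×d}, c ∈ ℝ^m, and let P be a symmetric PSD matrix indexed by {1, x_1,...,x_d, z_1,...,z_m} with P[1,1] = 1 satisfying: (a) P[z_i²] = W_i^T P[x z_i] for all i = 1,...,m (where W_i is the i-th row of W and P[x z_i] ∈ ℝ^d is the vector of entries P[x_j z_i]); and (b) P[x_j²] ≤ 1 for all j = 1,...,d. Then c^T P[z] ≤ √d · ‖W‖₂ · ‖c‖₂. -/
/-!
Factor `P` as the Gram matrix of vectors `e`, `x_j`, `z_i`. Then `P[z_i] = ⟪e, z_i⟫ ≤ ‖z_i‖`, and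
constraint (a) reads `‖z_i‖² = ⟪∑_j W_ij x_j, z_i⟫`, so `‖z_i‖ ≤ ‖∑_j W_ij x_j‖`. Applying `W`
to each coordinate of the `x_j` gives `∑_i ‖∑_j W_ij x_j‖² ≤ ‖W‖₂² ∑_j ‖x_j‖² ≤ ‖W‖₂² d`, and
Cauchy–Schwarz against `c` finishes.
-/

/-- The spectral (ℓ₂ operator) norm of a real matrix. -/
noncomputable def matSpectralNorm {m d : ℕ} (W : Matrix (Fin m) (Fin d) ℝ) : ℝ :=
  ‖LinearMap.toContinuousLinearMap (Matrix.toEuclideanLin W)‖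

open Matrix RealInnerProductSpace
open scoped MatrixOrder

theorem Matrix.PosSemidef.exists_eq_gram {n : Type*} [Fintype n] {P : Matrix n n ℝ}
    (hP : P.PosSemidef) : ∃ v : n → EuclideanSpace ℝ n, P = gram ℝ v := by
  classical
  obtain ⟨B, rfl⟩ := CStarAlgebra.nonneg_iff_eq_star_mul_self.mp hP.nonneg
  refine ⟨fun a ↦ WithLp.toLp 2 (fun k ↦ B k a), ?_⟩
  ext a b
  simp [gram_apply, mul_apply, PiLp.inner_apply, mul_comm]

theorem norm_le_norm_of_norm_sq_eq_inner {E : Type*} [NormedAddCommGroup E]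
    [InnerProductSpace ℝ E] {x y : E} (h : ‖y‖ ^ 2 = ⟪x, y⟫) : ‖y‖ ≤ ‖x‖ := by
  have := real_inner_le_norm x y
  nlinarith [norm_nonneg x, norm_nonneg y]

theorem matSpectralNorm_nonneg {m d : ℕ} (W : Matrix (Fin m) (Fin d) ℝ) :
    0 ≤ matSpectralNorm W :=
  norm_nonneg _

theorem sum_sq_mulVec_le {m d : ℕ} (W : Matrix (Fin m) (Fin d) ℝ) (v : Fin d → ℝ) :
    ∑ i, (W *ᵥ v) i ^ 2 ≤ matSpectralNorm W ^ 2 * ∑ j, v j ^ 2 := by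
  have h := (LinearMap.toContinuousLinearMap (toEuclideanLin W)).le_opNorm (WithLp.toLp 2 v)
  have := pow_le_pow_left₀ (norm_nonneg _) h 2
  simpa [mul_pow, EuclideanSpace.norm_sq_eq, matSpectralNorm] using this

theorem sum_norm_sum_smul_sq_le {m d : ℕ} {κ : Type*} [Fintype κ]
    (W : Matrix (Fin m) (Fin d) ℝ) (y : Fin d → EuclideanSpace ℝ κ) :
    ∑ i, ‖∑ j, W i j • y j‖ ^ 2 ≤ matSpectralNorm W ^ 2 * ∑ j, ‖y j‖ ^ 2 := by
  calc ∑ i, ‖∑ j, W i j • y j‖ ^ 2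
      = ∑ k, ∑ i, (W *ᵥ fun j ↦ y j k) i ^ 2 := by
        simp only [EuclideanSpace.norm_sq_eq, Real.norm_eq_abs, sq_abs, WithLp.ofLp_sum,
          WithLp.ofLp_smul, Finset.sum_apply, Pi.smul_apply, smul_eq_mul, mulVec, dotProduct]
        exact Finset.sum_comm
    _ ≤ ∑ k, matSpectralNorm W ^ 2 * ∑ j, y j k ^ 2 :=
        Finset.sum_le_sum fun k _ ↦ sum_sq_mulVec_le W _
    _ = matSpectralNorm W ^ 2 * ∑ j, ‖y j‖ ^ 2 := by
        simp only [EuclideanSpace.norm_sq_eq, Real.norm_eq_abs, sq_abs, ← Finset.mul_sum]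
        rw [Finset.sum_comm]

theorem sum_mul_inner_le_sqrt_mul_matSpectralNorm {m d : ℕ} {κ : Type*} [Fintype κ]
    (W : Matrix (Fin m) (Fin d) ℝ) (c : Fin m → ℝ) (e : EuclideanSpace ℝ κ)
    (x : Fin d → EuclideanSpace ℝ κ) (z : Fin m → EuclideanSpace ℝ κ) (he : ‖e‖ ≤ 1)
    (hz : ∀ i, ‖z i‖ ^ 2 = ⟪∑ j, W i j • x j, z i⟫) (hx : ∀ j, ‖x j‖ ≤ 1) :
    ∑ i, c i * ⟪e, z i⟫ ≤ √d * matSpectralNorm W * √(∑ i, c i ^ 2) := by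
  have hinner_le (i : Fin m) : |⟪e, z i⟫| ≤ ‖∑ j, W i j • x j‖ :=
    calc |⟪e, z i⟫| ≤ ‖e‖ * ‖z i‖ := abs_real_inner_le_norm e (z i)
      _ ≤ ‖z i‖ := mul_le_of_le_one_left (norm_nonneg _) he
      _ ≤ ‖∑ j, W i j • x j‖ := norm_le_norm_of_norm_sq_eq_inner (hz i)
  have hsum : ∑ i, ⟪e, z i⟫ ^ 2 ≤ matSpectralNorm W ^ 2 * d :=
    calc ∑ i, ⟪e, z i⟫ ^ 2 ≤ ∑ i, ‖∑ j, W i j • x j‖ ^ 2 :=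
          Finset.sum_le_sum fun i _ ↦ sq_le_sq.mpr ((hinner_le i).trans (le_abs_self _))
      _ ≤ matSpectralNorm W ^ 2 * ∑ j, ‖x j‖ ^ 2 := sum_norm_sum_smul_sq_le W x
      _ ≤ matSpectralNorm W ^ 2 * d := by
          gcongr
          calc ∑ j, ‖x j‖ ^ 2 ≤ ∑ _j : Fin d, (1 : ℝ) :=
                Finset.sum_le_sum fun j _ ↦ pow_le_one₀ (norm_nonneg _) (hx j)
            _ = d := by simp
  calc ∑ i, c i * ⟪e, z i⟫ ≤ √(∑ i, c i ^ 2) * √(∑ i, ⟪e, z i⟫ ^ 2) :=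
        Real.sum_mul_le_sqrt_mul_sqrt _ _ _
    _ ≤ √(∑ i, c i ^ 2) * √(matSpectralNorm W ^ 2 * d) := by gcongr
    _ = √d * matSpectralNorm W * √(∑ i, c i ^ 2) := by
        rw [Real.sqrt_mul (sq_nonneg _), Real.sqrt_sq (matSpectralNorm_nonneg W)]
        ring

/-- Lemma "spectral bound": Let `P` be a symmetric PSD moment matrix
indexed by `{1, x₁,…,x_d, z₁,…,z_m}` with `P[1,1] = 1`, satisfying
(a) `P[z_i²] = W_iᵀ P[x z_i]` for all `i`, and (b) `P[x_j²] ≤ 1` for all `j`.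
Then `cᵀ P[z] ≤ √d · ‖W‖₂ · ‖c‖₂`. -/
theorem stmt4 (m d : ℕ) (W : Matrix (Fin m) (Fin d) ℝ) (c : Fin m → ℝ)
    (P : Matrix (Unit ⊕ Fin d ⊕ Fin m) (Unit ⊕ Fin d ⊕ Fin m) ℝ)
    (hP : P.PosSemidef)
    (h11 : P (Sum.inl ()) (Sum.inl ()) = 1)
    (hrelu : ∀ i, P (Sum.inr (Sum.inr i)) (Sum.inr (Sum.inr i)) =
      ∑ j, W i j * P (Sum.inr (Sum.inl j)) (Sum.inr (Sum.inr i)))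
    (hinput : ∀ j, P (Sum.inr (Sum.inl j)) (Sum.inr (Sum.inl j)) ≤ 1) :
    ∑ i, c i * P (Sum.inl ()) (Sum.inr (Sum.inr i)) ≤
      Real.sqrt d * matSpectralNorm W * Real.sqrt (∑ i, c i ^ 2) := by
  obtain ⟨v, rfl⟩ := hP.exists_eq_gram
  simp only [gram_apply, real_inner_self_eq_norm_sq] at h11 hrelu hinput ⊢
  refine sum_mul_inner_le_sqrt_mul_matSpectralNorm W c _ (fun j ↦ v (.inr (.inl j)))
    (fun i ↦ v (.inr (.inr i))) ?_ (fun i ↦ ?_) (fun j ↦ ?_)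
  · exact (sq_le_one_iff₀ (norm_nonneg _)).mp h11.le
  · simp only [hrelu, sum_inner, real_inner_smul_left]
  · exact (sq_le_one_iff₀ (norm_nonneg _)).mp (hinput j)
end

section
/- Let W ∈ ℝ^{m×d} have entries in {−1,+1}, let x = 0 ∈ ℝ^d, l = −1 (all-ones vector times −1), u = 1, and for each i set z_i = ½‖W_i‖₁ = d/2. Then (x,z) is feasible for the LP relaxation of the one-hidden-layer ReLU network: z ≥ 0, z ≥ Wx, z_i ≤ ((ReLU(t_i) − ReLU(s_i))/(t_i − s_i))(W_i x − s_i) + ReLU(s_i) where s_i = −‖W_i‖₁ and t_i = ‖W_i‖₁, and l ≤ x ≤ u. Consequently, with c = 1 (the all-ones vector in ℝ^m), the LP optimal value is at least md/2. -/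
/-!
Over the box `[-1, 1]^d` the interval bounds of the `i`-th pre-activation are `∓ r_i` with
`r_i = ‖W_i‖₁`, so the upper chord of the ReLU envelope is `z_i ≤ (W_i x + r_i) / 2`.
At `x = 0` this admits `z_i = r_i / 2`, which is `d / 2` for a sign matrix, while `|W_i x| ≤ r_i`
caps every feasible `z_i` by `r_i`, so the supremum of the objective is finite and at least
`m d / 2`.
-/

open Finset in
/-- LP relaxation feasibility for a one-hidden-layer ReLU network `z = ReLU(W x)`
over the box `l ≤ x ≤ u`, with the convex outer envelope of each ReLU: lower bound
lines `z ≥ 0`, `z ≥ W x`, and the upper chord through `(s_i, ReLU s_i)` and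
`(t_i, ReLU t_i)` where `s_i = min_{l≤x≤u} W_i x` and `t_i = max_{l≤x≤u} W_i x`. -/
def LPFeasible {m d : ℕ} (W : Matrix (Fin m) (Fin d) ℝ) (l u : Fin d → ℝ)
    (x : Fin d → ℝ) (z : Fin m → ℝ) : Prop :=
  (∀ i, 0 ≤ z i) ∧
  (∀ i, (W.mulVec x) i ≤ z i) ∧
  (∀ i,
    let s := ∑ j, (min (W i j * l j) (W i j * u j))
    let t := ∑ j, (max (W i j * l j) (W i j * u j))
    z i ≤ (max t 0 - max s 0) / (t - s) * ((W.mulVec x) i - s) + max s 0) ∧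
  (∀ j, l j ≤ x j ∧ x j ≤ u j)

open Finset Matrix

section UnitBox

variable {m d : ℕ} (W : Matrix (Fin m) (Fin d) ℝ)

lemma min_mul_neg_one_mul_one (a : ℝ) : min (a * -1) (a * 1) = -|a| := by
  rw [mul_neg_one, mul_one, abs_eq_max_neg, ← min_neg_neg, neg_neg, min_comm]

lemma max_mul_neg_one_mul_one (a : ℝ) : max (a * -1) (a * 1) = |a| := by
  rw [mul_neg_one, mul_one, abs_eq_max_neg, max_comm]

lemma reluChord_neg_self {r : ℝ} (hr : 0 ≤ r) (w : ℝ) :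
    (max r 0 - max (-r) 0) / (r - -r) * (w - -r) + max (-r) 0 = r / (2 * r) * (w + r) := by
  rw [max_eq_left hr, max_eq_right (neg_nonpos.mpr hr)]
  ring

lemma div_two_mul_self_mul_self (r : ℝ) : r / (2 * r) * r = r / 2 := by
  rcases eq_or_ne r 0 with rfl | hr
  · simp
  · field_simp

-- The slope `r / (2 * r)` is `1 / 2`, except for a zero row where `x / 0 = 0` makes it `0`.
lemma lpFeasible_unitBox_iff (x : Fin d → ℝ) (z : Fin m → ℝ) :
    LPFeasible W (fun _ => -1) (fun _ => 1) x z ↔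
      (∀ i, 0 ≤ z i) ∧ (∀ i, (W *ᵥ x) i ≤ z i) ∧
      (∀ i, z i ≤ (∑ j, |W i j|) / (2 * ∑ j, |W i j|) * ((W *ᵥ x) i + ∑ j, |W i j|)) ∧
      (∀ j, -1 ≤ x j ∧ x j ≤ 1) := by
  simp only [LPFeasible, min_mul_neg_one_mul_one, max_mul_neg_one_mul_one, sum_neg_distrib,
    reluChord_neg_self (sum_nonneg fun j _ => abs_nonneg (W _ j))]

lemma abs_mulVec_le_sum_abs {x : Fin d → ℝ} (hx : ∀ j, -1 ≤ x j ∧ x j ≤ 1) (i : Fin m) :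
    |(W *ᵥ x) i| ≤ ∑ j, |W i j| :=
  calc |(W *ᵥ x) i| = |∑ j, W i j * x j| := rfl
    _ ≤ ∑ j, |W i j * x j| := abs_sum_le_sum_abs _ _
    _ ≤ ∑ j, |W i j| := sum_le_sum fun j _ => by
        rw [abs_mul]
        exact mul_le_of_le_one_right (abs_nonneg _) (abs_le.mpr (hx j))

lemma lpFeasible_zero_half_sum_abs :
    LPFeasible W (fun _ => -1) (fun _ => 1) (fun _ => 0) (fun i => (1 / 2) * ∑ j, |W i j|) := by
  have hW0 : W *ᵥ (fun _ => (0 : ℝ)) = 0 := mulVec_zero W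
  refine (lpFeasible_unitBox_iff W _ _).mpr ⟨fun i => ?_, fun i => ?_, fun i => ?_, fun j => ?_⟩
  · positivity
  · rw [hW0]
    positivity
  · rw [hW0, Pi.zero_apply, zero_add, div_two_mul_self_mul_self]
    linarith
  · norm_num

lemma le_sum_abs_of_lpFeasible {x : Fin d → ℝ} {z : Fin m → ℝ}
    (h : LPFeasible W (fun _ => -1) (fun _ => 1) x z) (i : Fin m) : z i ≤ ∑ j, |W i j| := by
  obtain ⟨-, -, hchord, hx⟩ := (lpFeasible_unitBox_iff W x z).mp h
  set r := ∑ j, |W i j|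
  have hw := abs_le.mp (abs_mulVec_le_sum_abs W hx i)
  have hslope := div_two_mul_self_mul_self r
  calc z i ≤ r / (2 * r) * ((W *ᵥ x) i + r) := hchord i
    _ ≤ r / (2 * r) * (r + r) := by gcongr; linarith [hw.2]
    _ = r := by linarith

lemma bddAbove_lpObjective_unitBox :
    BddAbove {v : ℝ | ∃ x z, LPFeasible W (fun _ => -1) (fun _ => 1) x z ∧ v = ∑ i, z i} := by
  refine ⟨∑ i, ∑ j, |W i j|, ?_⟩
  rintro v ⟨x, z, h, rfl⟩
  exact sum_le_sum fun i _ => le_sum_abs_of_lpFeasible W h i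

end UnitBox

theorem stmt5_general (m d : ℕ) (W : Matrix (Fin m) (Fin d) ℝ)
    (hW : ∀ i j, W i j = 1 ∨ W i j = -1) :
    LPFeasible W (fun _ => -1) (fun _ => 1) (fun _ => 0)
      (fun i => (1 / 2) * ∑ j, |W i j|) ∧
    (m * d : ℝ) / 2 ≤
      sSup {v : ℝ | ∃ x z, LPFeasible W (fun _ => -1) (fun _ => 1) x z ∧
        v = ∑ i, z i} := by
  have hfeas := lpFeasible_zero_half_sum_abs W
  have hrow : ∀ i, ∑ j, |W i j| = d := fun i => by
    simp [fun j => show |W i j| = 1 by rcases hW i j with h | h <;> simp [h]]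
  refine ⟨hfeas, le_csSup_of_le (bddAbove_lpObjective_unitBox W) ⟨_, _, hfeas, rfl⟩ ?_⟩
  simp only [hrow, sum_const, card_univ, Fintype.card_fin, nsmul_eq_mul]
  linarith

/-- For a sign matrix `W ∈ {−1,+1}^{m×d}`, the point `x = 0`,
`z_i = ½‖W_i‖₁ = d/2` is feasible for the LP relaxation over the box `[-1,1]^d`,
and consequently (with objective vector `c = 𝟏`) the LP optimal value is at
least `m d / 2`. -/
theorem stmt5 (m d : ℕ) (hd : 0 < d) (W : Matrix (Fin m) (Fin d) ℝ)
    (hW : ∀ i j, W i j = 1 ∨ W i j = -1) :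
    LPFeasible W (fun _ => -1) (fun _ => 1) (fun _ => 0)
      (fun i => (1 / 2) * ∑ j, |W i j|) ∧
    (m * d : ℝ) / 2 ≤
      sSup {v : ℝ | ∃ x z, LPFeasible W (fun _ => -1) (fun _ => 1) x z ∧
        v = ∑ i, z i} :=
  stmt5_general m d W hW
end

section
/- Let P be a symmetric PSD matrix indexed by {1, x, z} (scalars) with P[1] = 1, P[z²] = P[xz], P[z] ≥ 0, P[z] ≥ P[x], and P[x²] ≤ c² for some c ≥ 0. Then P[z] ≤ (c + P[x])/2 ≤ c. -/
/-!
Read `P` as the Gram matrix of a unit vector `e` and vectors `x`, `z`. The relation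
`P[z²] = P[xz]` says `‖2z - x‖ = ‖x‖`, so Cauchy–Schwarz gives
`2 P[z] - P[x] = ⟪2z - x, e⟫ ≤ ‖x‖ ≤ c` and `P[x] = ⟪x, e⟫ ≤ ‖x‖ ≤ c`. Cauchy–Schwarz for the
positive semidefinite form `(u, v) ↦ u ⬝ᵥ P *ᵥ v` yields both bounds without factoring `P`;
`2z - x` and `x` are then the coefficient vectors `![0, -1, 2]` and `![0, 1, 0]`.
-/

open Matrix

theorem Matrix.IsSymm.dotProduct_mulVec_comm {n R : Type*} [Fintype n] [CommSemiring R]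
    {A : Matrix n n R} (hA : A.IsSymm) (x y : n → R) : y ⬝ᵥ A *ᵥ x = x ⬝ᵥ A *ᵥ y := by
  rw [dotProduct_mulVec, dotProduct_comm, ← mulVec_transpose, hA.eq]

namespace Matrix.PosSemidef

variable {n R : Type*} [Fintype n] [CommRing R] [LinearOrder R] [IsStrictOrderedRing R]
  [StarRing R] [TrivialStar R] {A : Matrix n n R}

theorem dotProduct_mulVec_sq_le (hA : A.PosSemidef) (x y : n → R) :
    (x ⬝ᵥ A *ᵥ y) ^ 2 ≤ (x ⬝ᵥ A *ᵥ x) * (y ⬝ᵥ A *ᵥ y) := by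
  classical
  rw [sq]
  nth_rw 2 [← (isHermitian_iff_isSymm.mp hA.isHermitian).dotProduct_mulVec_comm]
  simpa only [toLinearMap₂'_apply'] using
    LinearMap.BilinForm.apply_mul_apply_le_of_forall_zero_le (toLinearMap₂' R A)
      (fun v ↦ by simpa only [toLinearMap₂'_apply', star_trivial] using
        hA.dotProduct_mulVec_nonneg v) x y

theorem abs_dotProduct_mulVec_le (hA : A.PosSemidef) {x y : n → R} {c : R} (hc : 0 ≤ c)
    (h : (x ⬝ᵥ A *ᵥ x) * (y ⬝ᵥ A *ᵥ y) ≤ c ^ 2) : |x ⬝ᵥ A *ᵥ y| ≤ c :=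
  abs_le_of_sq_le_sq ((hA.dotProduct_mulVec_sq_le x y).trans h) hc

end Matrix.PosSemidef

theorem stmt15_general (c : ℝ) (hc : 0 ≤ c) (P : Matrix (Fin 3) (Fin 3) ℝ)
    (hP : P.PosSemidef)
    (h11 : P 0 0 = 1)
    (hq : P 2 2 = P 1 2)
    (hx2 : P 1 1 ≤ c ^ 2) :
    P 0 2 ≤ (c + P 0 1) / 2 ∧ (c + P 0 1) / 2 ≤ c := by
  have h21 : P 2 1 = P 1 2 := hP.isHermitian.apply 1 2
  have hee : ![1, 0, 0] ⬝ᵥ P *ᵥ ![1, 0, 0] = 1 := by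
    simp only [dotProduct, mulVec, Fin.sum_univ_three, cons_val]
    linear_combination h11
  have hxx : ![0, 1, 0] ⬝ᵥ P *ᵥ ![0, 1, 0] = P 1 1 := by
    simp only [dotProduct, mulVec, Fin.sum_univ_three, cons_val]
    ring
  have hww : ![0, -1, 2] ⬝ᵥ P *ᵥ ![0, -1, 2] = P 1 1 := by
    simp only [dotProduct, mulVec, Fin.sum_univ_three, cons_val]
    linear_combination 4 * hq - 2 * h21
  have hex : ![1, 0, 0] ⬝ᵥ P *ᵥ ![0, 1, 0] = P 0 1 := by
    simp only [dotProduct, mulVec, Fin.sum_univ_three, cons_val]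
    ring
  have hew : ![1, 0, 0] ⬝ᵥ P *ᵥ ![0, -1, 2] = 2 * P 0 2 - P 0 1 := by
    simp only [dotProduct, mulVec, Fin.sum_univ_three, cons_val]
    ring
  have hzx : |2 * P 0 2 - P 0 1| ≤ c :=
    hew ▸ hP.abs_dotProduct_mulVec_le hc (by rwa [hee, hww, one_mul])
  have hx : |P 0 1| ≤ c :=
    hex ▸ hP.abs_dotProduct_mulVec_le hc (by rwa [hee, hxx, one_mul])
  constructor <;> linarith [le_abs_self (2 * P 0 2 - P 0 1), le_abs_self (P 0 1)]

/-- Let `P` be a symmetric PSD 3×3 moment matrix indexed by `1, x, z`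
(indices 0, 1, 2) with `P[1] = 1`, `P[z²] = P[xz]`, `P[z] ≥ 0`, `P[z] ≥ P[x]`, and
`P[x²] ≤ c²` for some `c ≥ 0`. Then `P[z] ≤ (c + P[x])/2 ≤ c`. -/
theorem stmt15 (c : ℝ) (hc : 0 ≤ c) (P : Matrix (Fin 3) (Fin 3) ℝ)
    (hP : P.PosSemidef)
    (h11 : P 0 0 = 1)
    (hq : P 2 2 = P 1 2)
    (hz : 0 ≤ P 0 2)
    (hzx : P 0 1 ≤ P 0 2)
    (hx2 : P 1 1 ≤ c ^ 2) :
    P 0 2 ≤ (c + P 0 1) / 2 ∧ (c + P 0 1) / 2 ≤ c :=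
  stmt15_general c hc P hP h11 hq hx2
end

section
/- Let P ⪰ 0 be indexed by {1, x₁,...,x_d, z₁,...,z_m} with P[1]=1, satisfying the ReLU quadratic constraints P[z_i²] = W_i^T P[x z_i] and the input constraints P[x_j²] ≤ 1 for all j. Then tr(P[zz^T]) ≤ d‖W‖₂². -/
/-!
For each hidden unit `i`, testing `P ⪰ 0` against the vector `(0, W_i, -e_i)` and using the ReLU
constraint gives `P[z_i²] ≤ W_iᵀ P[xxᵀ] W_i`. Summing over `i` bounds `tr P[zzᵀ]` by
`tr (W P[xxᵀ] Wᵀ)`, which is at most `‖W‖₂² tr P[xxᵀ] ≤ d ‖W‖₂²`: decompose the PSD block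
`P[xxᵀ]` into rank-one terms `v vᵀ`, for which the bound is `‖W v‖² ≤ ‖W‖₂² ‖v‖²`.
-/

open Matrix

theorem Matrix.PosSemidef.dotProduct_mulVec_le_of_eq {n : Type*} [Fintype n]
    {P : Matrix n n ℝ} (hP : P.PosSemidef) {u v : n → ℝ}
    (h : v ⬝ᵥ P *ᵥ v = u ⬝ᵥ P *ᵥ v) : v ⬝ᵥ P *ᵥ v ≤ u ⬝ᵥ P *ᵥ u := by
  have hsymm : v ⬝ᵥ P *ᵥ u = u ⬝ᵥ P *ᵥ v := by
    rw [dotProduct_mulVec, ← mulVec_transpose, dotProduct_comm,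
      ← conjTranspose_eq_transpose_of_trivial, hP.isHermitian]
  have hnonneg := hP.dotProduct_mulVec_nonneg (u - v)
  simp only [star_trivial, mulVec_sub, dotProduct_sub, sub_dotProduct] at hnonneg
  linarith

open scoped Matrix.Norms.L2Operator in
theorem matSpectralNorm_eq_l2_opNorm {m d : ℕ} (W : Matrix (Fin m) (Fin d) ℝ) :
    matSpectralNorm W = ‖W‖ := rfl

theorem dotProduct_mulVec_self_le {m d : ℕ} (W : Matrix (Fin m) (Fin d) ℝ) (v : Fin d → ℝ) :
    (W *ᵥ v) ⬝ᵥ (W *ᵥ v) ≤ matSpectralNorm W ^ 2 * (v ⬝ᵥ v) := by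
  open scoped Matrix.Norms.L2Operator in
  have h := pow_le_pow_left₀ (norm_nonneg _) (W.l2_opNorm_mulVec (WithLp.toLp 2 v)) 2
  rw [mul_pow, EuclideanSpace.norm_sq_eq, EuclideanSpace.norm_sq_eq] at h
  simpa [dotProduct, ← sq, matSpectralNorm_eq_l2_opNorm] using h

theorem trace_mul_mul_transpose_le {m d : ℕ} (W : Matrix (Fin m) (Fin d) ℝ)
    {Q : Matrix (Fin d) (Fin d) ℝ} (hQ : Q.PosSemidef) :
    (W * Q * Wᵀ).trace ≤ matSpectralNorm W ^ 2 * Q.trace := by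
  obtain ⟨r, v, rfl⟩ := posSemidef_iff_eq_sum_vecMulVec.mp hQ
  simp only [star_trivial, Matrix.mul_sum, Matrix.sum_mul, trace_sum, Finset.mul_sum,
    mul_vecMulVec, vecMulVec_mul, trace_vecMulVec]
  refine Finset.sum_le_sum fun k _ => ?_
  simpa [vecMul_transpose] using dotProduct_mulVec_self_le W (v k)

theorem trace_mul_mul_transpose_eq_sum {m n : Type*} [Fintype m] [Fintype n]
    (W : Matrix m n ℝ) (Q : Matrix n n ℝ) :
    (W * Q * Wᵀ).trace = ∑ i, W i ⬝ᵥ Q *ᵥ W i := by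
  simp only [trace, diag, mul_apply, transpose_apply, dotProduct, mulVec, Finset.sum_mul,
    Finset.mul_sum]
  exact Finset.sum_congr rfl fun i _ => Finset.sum_comm.trans
    (Finset.sum_congr rfl fun j _ => Finset.sum_congr rfl fun k _ => by ring)

section MomentMatrix

variable {κ α β : Type*} [Fintype α]

/-- The block `P[xxᵀ]` of a moment matrix indexed by `{1} ⊕ {x_j} ⊕ {z_i}`. -/
abbrev inputBlock (P : Matrix (κ ⊕ α ⊕ β) (κ ⊕ α ⊕ β) ℝ) : Matrix α α ℝ :=
  P.submatrix (Sum.inr ∘ Sum.inl) (Sum.inr ∘ Sum.inl)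

theorem diag_le_dotProduct_inputBlock_mulVec [Fintype κ] [Fintype β]
    {P : Matrix (κ ⊕ α ⊕ β) (κ ⊕ α ⊕ β) ℝ} (hP : P.PosSemidef) (w : α → ℝ) (i : β)
    (hrelu : P (Sum.inr (Sum.inr i)) (Sum.inr (Sum.inr i)) =
      ∑ j, w j * P (Sum.inr (Sum.inl j)) (Sum.inr (Sum.inr i))) :
    P (Sum.inr (Sum.inr i)) (Sum.inr (Sum.inr i)) ≤ w ⬝ᵥ inputBlock P *ᵥ w := by
  classical
  let u : κ ⊕ α ⊕ β → ℝ := Sum.elim 0 (Sum.elim w 0)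
  let v : κ ⊕ α ⊕ β → ℝ := Pi.single (Sum.inr (Sum.inr i)) 1
  have huu : u ⬝ᵥ P *ᵥ u = w ⬝ᵥ inputBlock P *ᵥ w := by
    simp [u, dotProduct, mulVec, Fintype.sum_sum_type]
  have huv : u ⬝ᵥ P *ᵥ v = ∑ j, w j * P (Sum.inr (Sum.inl j)) (Sum.inr (Sum.inr i)) := by
    simp [u, v, dotProduct, mulVec_single, Fintype.sum_sum_type]
  have hvv : v ⬝ᵥ P *ᵥ v = P (Sum.inr (Sum.inr i)) (Sum.inr (Sum.inr i)) := by
    simp [v, mulVec_single]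
  rw [← hvv, ← huu]
  exact hP.dotProduct_mulVec_le_of_eq (by rw [hvv, huv, hrelu])

theorem trace_inputBlock_le_card {P : Matrix (κ ⊕ α ⊕ β) (κ ⊕ α ⊕ β) ℝ}
    (hinput : ∀ j, P (Sum.inr (Sum.inl j)) (Sum.inr (Sum.inl j)) ≤ 1) :
    (inputBlock P).trace ≤ Fintype.card α := by
  simpa [trace] using Finset.sum_le_sum fun j (_ : j ∈ Finset.univ) => hinput j

end MomentMatrix

theorem stmt19_general (m d : ℕ) (W : Matrix (Fin m) (Fin d) ℝ)
    (P : Matrix (Unit ⊕ Fin d ⊕ Fin m) (Unit ⊕ Fin d ⊕ Fin m) ℝ)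
    (hP : P.PosSemidef)
    (hrelu : ∀ i, P (Sum.inr (Sum.inr i)) (Sum.inr (Sum.inr i)) =
      ∑ j, W i j * P (Sum.inr (Sum.inl j)) (Sum.inr (Sum.inr i)))
    (hinput : ∀ j, P (Sum.inr (Sum.inl j)) (Sum.inr (Sum.inl j)) ≤ 1) :
    ∑ i, P (Sum.inr (Sum.inr i)) (Sum.inr (Sum.inr i)) ≤ d * matSpectralNorm W ^ 2 := by
  calc ∑ i, P (Sum.inr (Sum.inr i)) (Sum.inr (Sum.inr i))
      ≤ ∑ i, W i ⬝ᵥ inputBlock P *ᵥ W i :=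
        Finset.sum_le_sum fun i _ => diag_le_dotProduct_inputBlock_mulVec hP (W i) i (hrelu i)
    _ = (W * inputBlock P * Wᵀ).trace := (trace_mul_mul_transpose_eq_sum W _).symm
    _ ≤ matSpectralNorm W ^ 2 * (inputBlock P).trace :=
        trace_mul_mul_transpose_le W (hP.submatrix _)
    _ ≤ matSpectralNorm W ^ 2 * d := by
        gcongr
        simpa using trace_inputBlock_le_card hinput
    _ = d * matSpectralNorm W ^ 2 := mul_comm _ _

/-- Let `P ⪰ 0` be a moment matrix indexed by `{1, x₁,…,x_d, z₁,…,z_m}`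
with `P[1] = 1`, satisfying the ReLU quadratic constraints `P[z_i²] = W_iᵀ P[x z_i]`
and the input constraints `P[x_j²] ≤ 1`. Then `tr P[zzᵀ] ≤ d ‖W‖₂²`. -/
theorem stmt19 (m d : ℕ) (W : Matrix (Fin m) (Fin d) ℝ)
    (P : Matrix (Unit ⊕ Fin d ⊕ Fin m) (Unit ⊕ Fin d ⊕ Fin m) ℝ)
    (hP : P.PosSemidef)
    (h11 : P (Sum.inl ()) (Sum.inl ()) = 1)
    (hrelu : ∀ i, P (Sum.inr (Sum.inr i)) (Sum.inr (Sum.inr i)) =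
      ∑ j, W i j * P (Sum.inr (Sum.inl j)) (Sum.inr (Sum.inr i)))
    (hinput : ∀ j, P (Sum.inr (Sum.inl j)) (Sum.inr (Sum.inl j)) ≤ 1) :
    ∑ i, P (Sum.inr (Sum.inr i)) (Sum.inr (Sum.inr i)) ≤ d * matSpectralNorm W ^ 2 :=
  stmt19_general m d W P hP hrelu hinput
end
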